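/- arXiv:2104.06151 — 2 statements merged into one kernel-verified Lean document; each statement's English description precedes it below -/
import Mathlib

section
/- Let G be a group, φ : G → ℤ a surjective group homomorphism, g ∈ G with φ(g) = 1, and n ≥ 1 an integer such that gⁿ commutes with every element of ker φ. Let L₀ be a subgroup of ker φ, and set Lᵢ = g^{-i} L₀ g^{i} for 0 ≤ i ≤ n−1. Assume that for all i ≠ j every element of Lᵢ commutes with every element of Lⱼ. Then the map ξ : L₀ ≀ₙ ℤ → G defined by ξ(b₀, b₁, …, b_{n−1}; k) = b₀ (g^{-1} b₁ g) (g^{-2} b₂ g^{2}) ⋯ (g^{-(n−1)} b_{n−1} g^{n−1}) · g^{k} is a group homomorphism. -/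
/-! Write `cᵢ(x) = g⁻ⁱ x gⁱ`, so that `ξ(b; k) = (∏ᵢ cᵢ(bᵢ)) gᵏ`. Because the `Lᵢ` commute
elementwise, the factors of `ξ((b; k)(b'; k'))` can be separated into
`∏ᵢ cᵢ(bᵢ) · ∏ᵢ cᵢ(b'ᵢ₊ₖ) · g^{k+k'}`. Since `gⁿ` centralises `ker φ`, for `x ∈ ker φ` the
conjugate `g⁻ᵐ x gᵐ` depends only on `m mod n`; hence conjugating `∏ⱼ cⱼ(b'ⱼ)` by `gᵏ` gives
`∏ⱼ c_{j-k}(b'ⱼ)`, a reordering of `∏ᵢ cᵢ(b'ᵢ₊ₖ)` whose factors again commute. This is exactly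
`ξ(b; k) ξ(b'; k') = ∏ᵢ cᵢ(bᵢ) · gᵏ (∏ⱼ cⱼ(b'ⱼ)) g⁻ᵏ · g^{k+k'}`. -/

open Pointwise

open Fin.IntCast in
/-- The multiplication of the wreath product `H ≀ₙ ℤ`: the underlying set is
`(Fin n → H) × ℤ` and `(b, k) * (b', k') = (b · α(b'; k), k + k')`, where
`α(b'; k) i = b' (i + k)`, indices taken modulo `n` (this is the semidirect product
`Hⁿ ⋊ ℤ` with respect to the cyclic-shift action of `ℤ` on `Hⁿ`). -/
def wreathMul {H : Type*} [Group H] {n : ℕ} [NeZero n]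
    (p q : (Fin n → H) × ℤ) : (Fin n → H) × ℤ :=
  (p.1 * fun i : Fin n => q.1 (i + (p.2 : Fin n)), p.2 + q.2)

/-- The map `ξ : L₀ ≀ₙ ℤ → G`,
`ξ(b₀, …, b_{n-1}; k) = b₀ (g⁻¹ b₁ g) (g⁻² b₂ g²) ⋯ (g^{-(n-1)} b_{n-1} g^{n-1}) · g ^ k`. -/
def wreathToGroup {G : Type*} [Group G] (g : G) (n : ℕ) (L₀ : Subgroup G)
    (p : (Fin n → L₀) × ℤ) : G :=
  ((List.finRange n).map fun i : Fin n =>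
    (g ^ (i : ℕ))⁻¹ * ((p.1 i : G)) * g ^ (i : ℕ)).prod * g ^ p.2

open Fin.IntCast

theorem List.prod_map_mul_of_pairwise_commute {ι M : Type*} [Monoid M] {f h : ι → M} :
    ∀ {l : List ι}, l.Pairwise (fun i j => Commute (h i) (f j)) →
      (l.map fun i => f i * h i).prod = (l.map f).prod * (l.map h).prod
  | [], _ => by simp
  | a :: l, hc => by
    obtain ⟨ha, hl⟩ := List.pairwise_cons.mp hc
    have hcomm : Commute (h a) (l.map f).prod :=
      Commute.list_prod_right _ _ fun _ hx => by
        obtain ⟨j, hj, rfl⟩ := List.mem_map.mp hx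
        exact ha j hj
    simp only [List.map_cons, List.prod_cons, List.prod_map_mul_of_pairwise_commute hl]
    rw [mul_assoc, ← mul_assoc (h a), hcomm.eq]
    simp only [mul_assoc]

theorem List.prod_map_finRange_comp_perm {M : Type*} [Monoid M] {n : ℕ} (σ : Equiv.Perm (Fin n))
    {f : Fin n → M} (hf : _root_.Pairwise fun i j => Commute (f i) (f j)) :
    ((List.finRange n).map (f ∘ σ)).prod = ((List.finRange n).map f).prod := by
  simp only [← List.ofFn_eq_map]
  refine (σ.ofFn_comp_perm f).prod_eq' (List.pairwise_ofFn.mpr fun i j hij => ?_)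
  exact hf (σ.injective.ne hij.ne)

section ConjByPowers

variable {G : Type*} [Group G] {g x : G} {n : ℕ}

theorem conj_zpow_eq_of_modEq (hx : Commute (g ^ n) x) {m m' : ℤ} (hm : m ≡ m' [ZMOD n]) :
    (g ^ m)⁻¹ * x * g ^ m = (g ^ m')⁻¹ * x * g ^ m' := by
  obtain ⟨t, ht⟩ := hm.dvd
  obtain rfl : m' = n * t + m := by linarith
  have hxt : Commute (g ^ ((n : ℤ) * t)) x := by
    rw [zpow_mul, zpow_natCast]
    exact hx.zpow_left t
  calc (g ^ m)⁻¹ * x * g ^ m = (g ^ m)⁻¹ * ((g ^ (n * t))⁻¹ * x * g ^ (n * t)) * g ^ m := by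
        rw [hxt.inv_mul_cancel]
    _ = (g ^ (n * t + m))⁻¹ * x * g ^ (n * t + m) := by group

theorem conj_zpow_eq_conj_pow_val_intCast [NeZero n] (hx : Commute (g ^ n) x) (m : ℤ) :
    (g ^ m)⁻¹ * x * g ^ m = (g ^ ((m : Fin n) : ℕ))⁻¹ * x * g ^ ((m : Fin n) : ℕ) := by
  have hval : (((m : Fin n) : ℕ) : ℤ) = m % n := by
    rw [Fin.val_intCast, Int.toNat_of_nonneg (Int.emod_nonneg _ (by exact_mod_cast NeZero.ne n))]
  rw [← zpow_natCast, hval]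
  exact conj_zpow_eq_of_modEq hx (Int.mod_modEq m n).symm

theorem zpow_mul_conj_pow_mul_zpow_inv [NeZero n] (hx : Commute (g ^ n) x) (k : ℤ) (j : Fin n) :
    g ^ k * ((g ^ (j : ℕ))⁻¹ * x * g ^ (j : ℕ)) * (g ^ k)⁻¹
      = (g ^ ((j - k : Fin n) : ℕ))⁻¹ * x * g ^ ((j - k : Fin n) : ℕ) := by
  have hcast : (((j : ℕ) - k : ℤ) : Fin n) = j - k := by
    open Fin.CommRing in push_cast [Fin.cast_val_eq_self]; rfl
  calc g ^ k * ((g ^ (j : ℕ))⁻¹ * x * g ^ (j : ℕ)) * (g ^ k)⁻¹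
      = (g ^ ((j : ℕ) - k : ℤ))⁻¹ * x * g ^ ((j : ℕ) - k : ℤ) := by group
    _ = _ := by rw [conj_zpow_eq_conj_pow_val_intCast hx, hcast]

theorem zpow_mul_prod_conj_pow_mul_zpow_inv [NeZero n] {b : Fin n → G}
    (hb : ∀ j, Commute (g ^ n) (b j)) (k : ℤ)
    (hc : _root_.Pairwise fun i j : Fin n => Commute ((g ^ (i : ℕ))⁻¹ * b (i + k) * g ^ (i : ℕ))
      ((g ^ (j : ℕ))⁻¹ * b (j + k) * g ^ (j : ℕ))) :
    g ^ k * ((List.finRange n).map fun j : Fin n => (g ^ (j : ℕ))⁻¹ * b j * g ^ (j : ℕ)).prod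
        * (g ^ k)⁻¹
      = ((List.finRange n).map fun i : Fin n => (g ^ (i : ℕ))⁻¹ * b (i + k) * g ^ (i : ℕ)).prod := by
  rw [← MulAut.conj_apply, map_list_prod, List.map_map,
    ← List.prod_map_finRange_comp_perm (Equiv.subRight (k : Fin n)) hc]
  congr 1
  refine List.map_congr_left fun j _ => ?_
  rw [Function.comp_apply, MulAut.conj_apply, zpow_mul_conj_pow_mul_zpow_inv (hb j)]
  simp only [Function.comp_apply, Equiv.subRight_apply, sub_add_cancel]

end ConjByPowers

theorem wreathToGroup_isHom_general {G : Type*} [Group G]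
    (φ : G →* Multiplicative ℤ)
    (g : G)
    (n : ℕ) [NeZero n]
    (L₀ : Subgroup G) (hL₀ : L₀ ≤ φ.ker)
    (hgn : ∀ x ∈ φ.ker, g ^ n * x = x * g ^ n)
    (L : ℕ → Subgroup G) (hL : ∀ i, L i = MulAut.conj (g ^ i)⁻¹ • L₀)
    (hcomm : ∀ i j, i < n → j < n → i ≠ j →
      ∀ x ∈ L i, ∀ y ∈ L j, x * y = y * x) :
    ∀ p q : (Fin n → L₀) × ℤ,
      wreathToGroup g n L₀ (wreathMul p q)
        = wreathToGroup g n L₀ p * wreathToGroup g n L₀ q := by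
  rintro ⟨a, k⟩ ⟨b, k'⟩
  have hmemL (i : ℕ) (x : L₀) : (g ^ i)⁻¹ * (x : G) * g ^ i ∈ L i := by
    have hconj : MulAut.conj (g ^ i)⁻¹ • (x : G) = (g ^ i)⁻¹ * x * g ^ i := by
      rw [MulAut.smul_def, MulAut.conj_apply, inv_inv]
    exact hL i ▸ hconj ▸ Subgroup.smul_mem_pointwise_smul _ _ L₀ x.2
  have hcommL {i j : Fin n} (hij : i ≠ j) (x y : L₀) :
      Commute ((g ^ (i : ℕ))⁻¹ * (x : G) * g ^ (i : ℕ)) ((g ^ (j : ℕ))⁻¹ * (y : G) * g ^ (j : ℕ)) :=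
    hcomm i j i.isLt j.isLt (Fin.val_ne_of_ne hij) _ (hmemL i x) _ (hmemL j y)
  have hshift := zpow_mul_prod_conj_pow_mul_zpow_inv (b := fun j => (b j : G))
    (fun j => hgn _ (hL₀ (b j).2)) k fun i j hij => hcommL hij _ _
  have hconj_mul (i : ℕ) (x y : G) :
      (g ^ i)⁻¹ * (x * y) * g ^ i = (g ^ i)⁻¹ * x * g ^ i * ((g ^ i)⁻¹ * y * g ^ i) := by group
  simp only [wreathToGroup, wreathMul, Pi.mul_apply, Subgroup.coe_mul, hconj_mul]
  rw [List.prod_map_mul_of_pairwise_commute, ← hshift, zpow_add]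
  · group
  · exact (List.pairwise_lt_finRange n).imp fun hlt => hcommL hlt.ne _ _

/-- Let `G` be a group, `φ : G → ℤ` a surjective homomorphism, `g ∈ G`
with `φ g = 1`, and `n ≥ 1` such that `g ^ n` commutes with every element of `ker φ`.
Let `L₀ ≤ ker φ` and `L i = g⁻ⁱ L₀ gⁱ` for `0 ≤ i ≤ n - 1`; assume the subgroups
`L i`, `L j` commute elementwise for `i ≠ j`.  Then
`ξ(b₀, …, b_{n-1}; k) = b₀ (g⁻¹ b₁ g) ⋯ (g^{-(n-1)} b_{n-1} g^{n-1}) g ^ k` is a group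
homomorphism `L₀ ≀ₙ ℤ → G`. -/
theorem wreathToGroup_isHom {G : Type*} [Group G]
    (φ : G →* Multiplicative ℤ) (hφ : Function.Surjective φ)
    (g : G) (hg : φ g = Multiplicative.ofAdd 1)
    (n : ℕ) [NeZero n]
    (L₀ : Subgroup G) (hL₀ : L₀ ≤ φ.ker)
    (hgn : ∀ x ∈ φ.ker, g ^ n * x = x * g ^ n)
    (L : ℕ → Subgroup G) (hL : ∀ i, L i = MulAut.conj (g ^ i)⁻¹ • L₀)
    (hcomm : ∀ i j, i < n → j < n → i ≠ j →
      ∀ x ∈ L i, ∀ y ∈ L j, x * y = y * x) :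
    ∀ p q : (Fin n → L₀) × ℤ,
      wreathToGroup g n L₀ (wreathMul p q)
        = wreathToGroup g n L₀ p * wreathToGroup g n L₀ q :=
  wreathToGroup_isHom_general φ g n L₀ hL₀ hgn L hL hcomm
end

section
/- Let G be a group, φ : G → ℤ a surjective group homomorphism, g ∈ G with φ(g) = 1, L₀ a subgroup of ker φ, and n ≥ 1 an integer. Set Lᵢ = g^{-i} L₀ g^{i} for 0 ≤ i ≤ n−1. Assume: (1) gⁿ commutes with every element of ker φ; (2) for all i ≠ j every element of Lᵢ commutes with every element of Lⱼ, and the multiplication map L₀ × L₁ × ⋯ × L_{n−1} → ker φ is a bijection. Then every element x ∈ G admits a unique representation x = b₀ (g^{-1} b₁ g) (g^{-2} b₂ g^{2}) ⋯ (g^{-(n−1)} b_{n−1} g^{n−1}) · g^{k} with b₀, b₁, …, b_{n−1} ∈ L₀ and k ∈ ℤ. -/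
/-!
Since `φ g` generates `ℤ`, the exponent `k` is forced to be `φ x`, and then `x * g⁻ᵏ` lies in
`ker φ`. Conjugation by `gⁱ` is an isomorphism `L₀ ≃* Lᵢ`, so the unique decomposition of
`ker φ` as a product of elements of `L₀, …, L_{n-1}` becomes a unique choice of `b₀, …, b_{n-1} ∈ L₀`.
-/

open Pointwise

section

variable {G : Type*} [Group G] (g : G) (n : ℕ) (L₀ : Subgroup G)

def conjPowTupleEquiv :
    (Fin n → L₀) ≃ ((i : Fin n) → (MulAut.conj (g ^ (i : ℕ))⁻¹ • L₀ : Subgroup G)) :=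
  Equiv.piCongrRight fun i => (L₀.equivSMul (MulAut.conj (g ^ (i : ℕ))⁻¹)).toEquiv

@[simp]
theorem coe_conjPowTupleEquiv_apply (c : Fin n → L₀) (i : Fin n) :
    (conjPowTupleEquiv g n L₀ c i : G) = (g ^ (i : ℕ))⁻¹ * c i * g ^ (i : ℕ) := by
  show MulAut.conj (g ^ (i : ℕ))⁻¹ (c i : G) = _
  rw [MulAut.conj_apply, inv_inv]

theorem wreathToGroup_eq (p : (Fin n → L₀) × ℤ) :
    wreathToGroup g n L₀ p =
      ((List.finRange n).map fun i => (conjPowTupleEquiv g n L₀ p.1 i : G)).prod * g ^ p.2 := by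
  simp [wreathToGroup]

theorem map_wreathToGroup {H : Type*} [Group H] (φ : G →* H) (hL₀ : L₀ ≤ φ.ker)
    (p : (Fin n → L₀) × ℤ) : φ (wreathToGroup g n L₀ p) = φ g ^ p.2 := by
  simp [wreathToGroup, map_list_prod, Function.comp_def, φ.mem_ker.mp (hL₀ (p.1 _).2)]

theorem eq_wreathToGroup_iff (φ : G →* Multiplicative ℤ) (hg : φ g = Multiplicative.ofAdd 1)
    (hL₀ : L₀ ≤ φ.ker) (x : G) (p : (Fin n → L₀) × ℤ) :
    x = wreathToGroup g n L₀ p ↔ p.2 = (φ x).toAdd ∧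
      ((List.finRange n).map fun i => (conjPowTupleEquiv g n L₀ p.1 i : G)).prod =
        x * (g ^ (φ x).toAdd)⁻¹ := by
  constructor
  · rintro rfl
    have hexp : (φ (wreathToGroup g n L₀ p)).toAdd = p.2 := by
      simp [map_wreathToGroup g n L₀ φ hL₀, hg, ← ofAdd_zsmul]
    rw [hexp, wreathToGroup_eq, mul_inv_cancel_right]
    exact ⟨rfl, rfl⟩
  · rintro ⟨hk, hprod⟩
    rw [wreathToGroup_eq, hprod, hk, inv_mul_cancel_right]

end

theorem exists_unique_wreath_representation_general {G : Type*} [Group G]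
    (φ : G →* Multiplicative ℤ)
    (g : G) (hg : φ g = Multiplicative.ofAdd 1)
    (n : ℕ)
    (L₀ : Subgroup G) (hL₀ : L₀ ≤ φ.ker)
    (L : ℕ → Subgroup G) (hL : ∀ i, L i = MulAut.conj (g ^ i)⁻¹ • L₀)
    (hdirect : ∀ y ∈ φ.ker, ∃! b : (i : Fin n) → L (i : ℕ),
      ((List.finRange n).map fun i : Fin n => ((b i : G))).prod = y) :
    ∀ x : G, ∃! p : (Fin n → L₀) × ℤ, x = wreathToGroup g n L₀ p := by
  obtain rfl : L = fun i => MulAut.conj (g ^ i)⁻¹ • L₀ := funext hL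
  intro x
  have hker : x * (g ^ (φ x).toAdd)⁻¹ ∈ φ.ker := by simp [hg, ← ofAdd_zsmul]
  obtain ⟨c, hc, hc_unique⟩ :=
    (conjPowTupleEquiv g n L₀).existsUnique_congr_right.mpr (hdirect _ hker)
  refine ⟨(c, (φ x).toAdd), (eq_wreathToGroup_iff g n L₀ φ hg hL₀ x _).mpr ⟨rfl, hc⟩, ?_⟩
  rintro ⟨c', k'⟩ h
  obtain ⟨rfl, hc'⟩ := (eq_wreathToGroup_iff g n L₀ φ hg hL₀ x _).mp h
  rw [hc_unique c' hc']

/-- Let `G` be a group, `φ : G → ℤ` a surjective homomorphism, `g ∈ G`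
with `φ g = 1`, `L₀ ≤ ker φ` a subgroup and `n ≥ 1`.  Let `L i = g⁻ⁱ L₀ gⁱ` for
`0 ≤ i ≤ n - 1`.  Assume (1) `g ^ n` commutes with every element of `ker φ`;
(2) the subgroups `L i`, `L j` commute elementwise for `i ≠ j` and the multiplication
map `L₀ × L₁ × ⋯ × L_{n-1} → ker φ` is a bijection.  Then every `x ∈ G` admits a unique
representation
`x = b₀ (g⁻¹ b₁ g) (g⁻² b₂ g²) ⋯ (g^{-(n-1)} b_{n-1} g^{n-1}) · g ^ k`
with `b₀, …, b_{n-1} ∈ L₀` and `k ∈ ℤ`. -/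
theorem exists_unique_wreath_representation {G : Type*} [Group G]
    (φ : G →* Multiplicative ℤ) (hφ : Function.Surjective φ)
    (g : G) (hg : φ g = Multiplicative.ofAdd 1)
    (n : ℕ) [NeZero n]
    (L₀ : Subgroup G) (hL₀ : L₀ ≤ φ.ker)
    (hgn : ∀ x ∈ φ.ker, g ^ n * x = x * g ^ n)
    (L : ℕ → Subgroup G) (hL : ∀ i, L i = MulAut.conj (g ^ i)⁻¹ • L₀)
    (hcomm : ∀ i j, i < n → j < n → i ≠ j →
      ∀ x ∈ L i, ∀ y ∈ L j, x * y = y * x)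
    (hdirect : ∀ y ∈ φ.ker, ∃! b : (i : Fin n) → L (i : ℕ),
      ((List.finRange n).map fun i : Fin n => ((b i : G))).prod = y) :
    ∀ x : G, ∃! p : (Fin n → L₀) × ℤ, x = wreathToGroup g n L₀ p :=
  exists_unique_wreath_representation_general φ g hg n L₀ hL₀ L hL hdirect
end
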